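/- arXiv:2403.19437 — 2 statements merged into one kernel-verified Lean document; each statement's English description precedes it below -/
import Mathlib

section
/- Let (Ω, 𝒜, μ) be an atom-free σ-finite measure space, u ∈ L^1(Ω), and K ∈ (0, μ(Ω)). Then the following are equivalent: (i) μ(supp u) ≤ K; (ii) ‖u‖_1 = |u|_K; (iii) |u|_H = |u|_K for all H ∈ (K, μ(Ω)]; (iv) |u|_h = |u|_K for some h ∈ (K, μ(Ω)]. -/
open MeasureTheory Set
open scoped ENNReal

/-- The largest-K-norm: `|u|_K = sup { ∫_A |u| dμ : A measurable, μ(A) ≤ K }`. -/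
noncomputable def largestK {Ω : Type*} [MeasurableSpace Ω] (μ : Measure Ω) (K : ℝ≥0∞)
    (u : Ω → ℝ) : ℝ :=
  sSup {r : ℝ | ∃ A : Set Ω, MeasurableSet A ∧ μ A ≤ K ∧ r = ∫ x in A, |u x| ∂μ}

/-- A measure is atom-free if no measurable set `A` with `μ A > 0` is an atom. -/
def AtomFree {Ω : Type*} [MeasurableSpace Ω] (μ : Measure Ω) : Prop :=
  ∀ A : Set Ω, MeasurableSet A → 0 < μ A →
    ∃ B : Set Ω, MeasurableSet B ∧ B ⊆ A ∧ 0 < μ B ∧ 0 < μ (A \ B)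

/-!
The implications (i) ⇒ (ii) ⇒ (iii) ⇒ (iv) are immediate, since `|u|_K` is monotone in `K` and
bounded by `‖u‖₁`. For (iv) ⇒ (i): if `μ(supp u) > K`, some level set `{|u| ≥ t}`, `t > 0`, has
measure `> K`, and by Sierpiński's theorem (an atom-free measure takes all intermediate values)
every admissible set for `|u|_K` can be enlarged by a set of measure `δ > 0` inside that level set,
so `|u|_h ≥ |u|_K + t δ > |u|_K`.
-/

section

variable {Ω : Type*} [MeasurableSpace Ω] {μ : Measure Ω}

namespace MeasureTheory.Measure

/-- One step of Sierpiński's greedy construction: add to `B` a set of at least half the largest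
measure still available. -/
lemma exists_greedy_extension {C B : Set Ω} (hB : MeasurableSet B) (hBC : B ⊆ C) {v : ℝ≥0∞}
    (hv : v ≠ ∞) (hBv : μ B ≤ v) :
    ∃ B', MeasurableSet B' ∧ B ⊆ B' ∧ B' ⊆ C ∧ μ B' ≤ v ∧
      ∀ D, MeasurableSet D → D ⊆ C \ B → μ D ≤ v - μ B → μ B + μ D / 2 ≤ μ B' := by
  set S := {D | MeasurableSet D ∧ D ⊆ C \ B ∧ μ D ≤ v - μ B}
  have hS : ∀ D ∈ S, μ D ≤ sSup (μ '' S) := fun D hD => le_sSup (mem_image_of_mem μ hD)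
  have hS_fin : sSup (μ '' S) ≠ ∞ :=
    ne_top_of_le_ne_top (ENNReal.sub_ne_top hv) (sSup_le (by rintro _ ⟨D, hD, rfl⟩; exact hD.2.2))
  obtain ⟨D₀, ⟨hD₀, hD₀C, hD₀v⟩, hD₀S⟩ : ∃ D₀ ∈ S, sSup (μ '' S) / 2 ≤ μ D₀ := by
    rcases eq_or_ne (sSup (μ '' S)) 0 with h0 | h0
    · exact ⟨∅, ⟨MeasurableSet.empty, empty_subset _, by simp⟩, by simp [h0]⟩
    · obtain ⟨_, ⟨D₀, hD₀, rfl⟩, hlt⟩ := lt_sSup_iff.1 (ENNReal.half_lt_self h0 hS_fin)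
      exact ⟨D₀, hD₀, hlt.le⟩
  have hμBD₀ : μ (B ∪ D₀) = μ B + μ D₀ :=
    measure_union (disjoint_sdiff_right.mono_right hD₀C) hD₀
  refine ⟨B ∪ D₀, hB.union hD₀, subset_union_left,
    union_subset hBC (hD₀C.trans sdiff_subset), ?_, fun D hD hDC hDv => ?_⟩
  · rw [hμBD₀]
    exact (add_le_add le_rfl hD₀v).trans (add_tsub_cancel_of_le hBv).le
  · rw [hμBD₀]
    gcongr
    exact (ENNReal.div_le_div_right (hS D ⟨hD, hDC, hDv⟩) 2).trans hD₀S

end MeasureTheory.Measure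

namespace AtomFree

variable (hμ : AtomFree μ)
include hμ

lemma exists_subset_measure_le_half {C : Set Ω} (hC : MeasurableSet C) (hpos : 0 < μ C)
    (hfin : μ C ≠ ∞) : ∃ B, MeasurableSet B ∧ B ⊆ C ∧ 0 < μ B ∧ μ B ≤ 2⁻¹ * μ C := by
  obtain ⟨B, hB, hBC, hBpos, hCBpos⟩ := hμ C hC hpos
  rcases le_or_gt (μ B) (2⁻¹ * μ C) with h | h
  · exact ⟨B, hB, hBC, hBpos, h⟩
  · refine ⟨C \ B, hC.diff hB, sdiff_subset, hCBpos, ?_⟩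
    rw [measure_sdiff hBC hB.nullMeasurableSet (ne_top_of_le_ne_top hfin (measure_mono hBC))]
    refine tsub_le_iff_right.2 ?_
    calc μ C = 2⁻¹ * μ C + 2⁻¹ * μ C := by rw [← add_mul, ENNReal.inv_two_add_inv_two, one_mul]
      _ ≤ 2⁻¹ * μ C + μ B := by gcongr

lemma exists_subset_pos_measure_le {C : Set Ω} (hC : MeasurableSet C) (hpos : 0 < μ C)
    (hfin : μ C ≠ ∞) {ε : ℝ≥0∞} (hε : ε ≠ 0) :
    ∃ B, MeasurableSet B ∧ B ⊆ C ∧ 0 < μ B ∧ μ B ≤ ε := by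
  have halving : ∀ n : ℕ, ∃ B, MeasurableSet B ∧ B ⊆ C ∧ 0 < μ B ∧ μ B ≤ 2⁻¹ ^ n * μ C := by
    intro n
    induction n with
    | zero => exact ⟨C, hC, subset_rfl, hpos, by simp⟩
    | succ n ih =>
      obtain ⟨B, hB, hBC, hBpos, hBle⟩ := ih
      obtain ⟨B', hB', hB'B, hB'pos, hB'le⟩ := hμ.exists_subset_measure_le_half hB hBpos
        (ne_top_of_le_ne_top hfin (measure_mono hBC))
      refine ⟨B', hB', hB'B.trans hBC, hB'pos, hB'le.trans ?_⟩
      rw [pow_succ', mul_assoc]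
      gcongr
  obtain ⟨n, hn⟩ := ENNReal.exists_inv_two_pow_lt (ENNReal.div_pos hε hfin).ne'
  obtain ⟨B, hB, hBC, hBpos, hBle⟩ := halving n
  refine ⟨B, hB, hBC, hBpos, hBle.trans ?_⟩
  calc 2⁻¹ ^ n * μ C ≤ ε / μ C * μ C := by gcongr
    _ = ε := ENNReal.div_mul_cancel hpos.ne' hfin

/-- Sierpiński's theorem. Take the union of the greedy sequence of
`Measure.exists_greedy_extension`; if its measure fell short of `v`, a small set left over would
make every greedy step gain a fixed positive amount. -/
lemma exists_subset_measure_eq {C : Set Ω} (hC : MeasurableSet C) (hfin : μ C ≠ ∞)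
    {v : ℝ≥0∞} (hv : v ≤ μ C) : ∃ B, MeasurableSet B ∧ B ⊆ C ∧ μ B = v := by
  have hv_fin : v ≠ ∞ := ne_top_of_le_ne_top hfin hv
  choose! next hnext_meas hnext_sup hnext_sub hnext_le hnext_gain using
    fun B (hB : MeasurableSet B) (hBC : B ⊆ C) (hBv : μ B ≤ v) =>
      Measure.exists_greedy_extension (μ := μ) hB hBC hv_fin hBv
  set f : ℕ → Set Ω := fun n => next^[n] ∅
  have hf_succ : ∀ n, f (n + 1) = next (f n) := fun n => Function.iterate_succ_apply' next n ∅
  have hf : ∀ n, MeasurableSet (f n) ∧ f n ⊆ C ∧ μ (f n) ≤ v := by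
    intro n
    induction n with
    | zero => exact ⟨MeasurableSet.empty, empty_subset _, by simp [f]⟩
    | succ n ih =>
      rw [hf_succ]
      exact ⟨hnext_meas _ ih.1 ih.2.1 ih.2.2, hnext_sub _ ih.1 ih.2.1 ih.2.2,
        hnext_le _ ih.1 ih.2.1 ih.2.2⟩
  have hf_mono : Monotone f := monotone_nat_of_le_succ fun n => by
    rw [hf_succ]
    exact hnext_sup _ (hf n).1 (hf n).2.1 (hf n).2.2
  have hμU : μ (⋃ n, f n) = ⨆ n, μ (f n) := hf_mono.measure_iUnion
  refine ⟨⋃ n, f n, .iUnion fun n => (hf n).1, iUnion_subset fun n => (hf n).2.1,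
    le_antisymm (hμU ▸ iSup_le fun n => (hf n).2.2) (not_lt.1 fun hlt => ?_)⟩
  have hrest : 0 < μ (C \ ⋃ n, f n) :=
    (tsub_pos_of_lt (hlt.trans_le hv)).trans_le le_measure_sdiff
  obtain ⟨D, hD, hDC, hDpos, hDle⟩ := hμ.exists_subset_pos_measure_le
    (hC.diff (.iUnion fun n => (hf n).1)) hrest
    (ne_top_of_le_ne_top hfin (measure_mono sdiff_subset)) (tsub_pos_of_lt hlt).ne'
  have hgain : ∀ n : ℕ, n * (μ D / 2) ≤ μ (f n) := by
    intro n
    induction n with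
    | zero => simp
    | succ n ih =>
      have hfn : f n ⊆ ⋃ n, f n := subset_iUnion f n
      calc ((n + 1 : ℕ) : ℝ≥0∞) * (μ D / 2) = n * (μ D / 2) + μ D / 2 := by push_cast; ring
        _ ≤ μ (f n) + μ D / 2 := by gcongr
        _ ≤ μ (f (n + 1)) := by
          rw [hf_succ]
          exact hnext_gain _ (hf n).1 (hf n).2.1 (hf n).2.2 D hD
            (hDC.trans (sdiff_subset_sdiff_right hfn))
            (hDle.trans (tsub_le_tsub_left (measure_mono hfn) v))
  obtain ⟨n, hn⟩ := ENNReal.exists_nat_mul_gt (ENNReal.half_pos hDpos.ne').ne' hv_fin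
  exact (hn.trans_le (hgain n)).not_ge (hf n).2.2

end AtomFree

section largestK

variable {u : Ω → ℝ} {K H : ℝ≥0∞}

lemma largestK_set_nonempty :
    {r : ℝ | ∃ A : Set Ω, MeasurableSet A ∧ μ A ≤ K ∧ r = ∫ x in A, |u x| ∂μ}.Nonempty :=
  ⟨0, ∅, MeasurableSet.empty, by simp, by simp⟩

lemma integral_abs_mem_upperBounds_largestK_set (hu : Integrable u μ) :
    ∫ x, |u x| ∂μ ∈
      upperBounds {r : ℝ | ∃ A : Set Ω, MeasurableSet A ∧ μ A ≤ K ∧ r = ∫ x in A, |u x| ∂μ} := by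
  rintro _ ⟨A, -, -, rfl⟩
  exact setIntegral_le_integral hu.abs (.of_forall fun x => abs_nonneg _)

lemma largestK_set_bddAbove (hu : Integrable u μ) :
    BddAbove {r : ℝ | ∃ A : Set Ω, MeasurableSet A ∧ μ A ≤ K ∧ r = ∫ x in A, |u x| ∂μ} :=
  ⟨_, integral_abs_mem_upperBounds_largestK_set hu⟩

lemma le_largestK (hu : Integrable u μ) {A : Set Ω} (hA : MeasurableSet A) (hAK : μ A ≤ K) :
    ∫ x in A, |u x| ∂μ ≤ largestK μ K u :=
  le_csSup (largestK_set_bddAbove hu) ⟨A, hA, hAK, rfl⟩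

lemma largestK_le_integral (hu : Integrable u μ) : largestK μ K u ≤ ∫ x, |u x| ∂μ :=
  csSup_le largestK_set_nonempty (integral_abs_mem_upperBounds_largestK_set hu)

lemma largestK_mono (hu : Integrable u μ) (hKH : K ≤ H) : largestK μ K u ≤ largestK μ H u := by
  refine csSup_le largestK_set_nonempty ?_
  rintro _ ⟨A, hA, hAK, rfl⟩
  exact le_largestK hu hA (hAK.trans hKH)

lemma integral_abs_eq_largestK (hu : Integrable u μ) (hsupp : μ (Function.support u) ≤ K) :
    ∫ x, |u x| ∂μ = largestK μ K u := by
  refine le_antisymm ?_ (largestK_le_integral hu)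
  have hsub := subset_toMeasurable μ (Function.support u)
  calc ∫ x, |u x| ∂μ = ∫ x in toMeasurable μ (Function.support u), |u x| ∂μ := by
        refine (setIntegral_eq_integral_of_forall_compl_eq_zero fun x hx => ?_).symm
        rw [Function.notMem_support.1 fun h => hx (hsub h), abs_zero]
    _ ≤ largestK μ K u :=
        le_largestK hu (measurableSet_toMeasurable _ _) ((measure_toMeasurable _).trans_le hsupp)

/-- By Sierpiński's theorem, any admissible set for `|u|_K` can be completed inside `T` by a set
of measure exactly `δ`. -/
lemma largestK_add_le (hμ : AtomFree μ) (hu : Integrable u μ) {T : Set Ω} (hT : MeasurableSet T)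
    (hT_fin : μ T ≠ ∞) {t : ℝ} (htT : ∀ x ∈ T, t ≤ |u x|) {δ : ℝ≥0∞} (hδH : K + δ ≤ H)
    (hδT : K + δ ≤ μ T) : largestK μ K u + t * δ.toReal ≤ largestK μ H u := by
  rw [← le_sub_iff_add_le]
  refine csSup_le largestK_set_nonempty ?_
  rintro _ ⟨A, hA, hAK, rfl⟩
  rw [le_sub_iff_add_le]
  have hK_fin : K ≠ ∞ := ne_top_of_le_ne_top hT_fin (le_self_add.trans hδT)
  have hδ : δ ≤ μ (T \ A) := calc
    δ ≤ μ T - K := ENNReal.le_sub_of_add_le_left hK_fin hδT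
    _ ≤ μ T - μ A := tsub_le_tsub_left hAK _
    _ ≤ μ (T \ A) := le_measure_sdiff
  obtain ⟨B, hB, hBT, hBδ⟩ := hμ.exists_subset_measure_eq (hT.diff hA)
    (ne_top_of_le_ne_top hT_fin (measure_mono sdiff_subset)) hδ
  have hAB : Disjoint A B := disjoint_sdiff_right.mono_right hBT
  calc ∫ x in A, |u x| ∂μ + t * δ.toReal
      ≤ ∫ x in A, |u x| ∂μ + ∫ x in B, |u x| ∂μ := by
        gcongr
        rw [← hBδ]
        exact setIntegral_ge_of_const_le_real hB
          (hBδ ▸ ne_top_of_le_ne_top hT_fin (le_add_self.trans hδT))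
          (fun x hx => htT x (hBT hx).1) hu.abs.integrableOn
    _ = ∫ x in A ∪ B, |u x| ∂μ :=
        (setIntegral_union hAB hB hu.abs.integrableOn hu.abs.integrableOn).symm
    _ ≤ largestK μ H u := by
        refine le_largestK hu (hA.union hB) ?_
        calc μ (A ∪ B) ≤ μ A + μ B := measure_union_le _ _
          _ ≤ K + δ := by rw [hBδ]; gcongr
          _ ≤ H := hδH

lemma exists_pos_lt_measure_le_abs (hsupp : K < μ (Function.support u)) :
    ∃ t : ℝ, 0 < t ∧ K < μ {x | t ≤ |u x|} := by
  have hsupp_eq : Function.support u = ⋃ n : ℕ, {x | 1 / (n + 1 : ℝ) ≤ |u x|} := by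
    ext x
    simp only [Function.mem_support, mem_iUnion, mem_ofPred_eq]
    refine ⟨fun hx => ?_, fun ⟨n, hn⟩ hx => ?_⟩
    · obtain ⟨n, hn⟩ := exists_nat_one_div_lt (abs_pos.2 hx)
      exact ⟨n, hn.le⟩
    · rw [hx, abs_zero] at hn
      exact hn.not_gt Nat.one_div_pos_of_nat
  have hmono : Monotone fun n : ℕ => {x | 1 / (n + 1 : ℝ) ≤ |u x|} := by
    intro m n hmn x (hx : 1 / (m + 1 : ℝ) ≤ |u x|)
    exact (Nat.one_div_le_one_div hmn).trans hx
  rw [hsupp_eq, hmono.measure_iUnion, lt_iSup_iff] at hsupp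
  obtain ⟨n, hn⟩ := hsupp
  exact ⟨_, Nat.one_div_pos_of_nat, hn⟩

lemma largestK_lt_largestK (hμ : AtomFree μ) (hu : Integrable u μ)
    (hsupp : K < μ (Function.support u)) (hKH : K < H) : largestK μ K u < largestK μ H u := by
  obtain ⟨t, ht, hKt⟩ := exists_pos_lt_measure_le_abs hsupp
  have hnull : NullMeasurableSet {x | t ≤ |u x|} μ :=
    hu.1.aemeasurable.abs.nullMeasurable measurableSet_Ici
  obtain ⟨T, hT_sub, hT, hT_ae⟩ := hnull.exists_measurable_subset_ae_eq
  rw [← measure_congr hT_ae] at hKt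
  have hT_fin : μ T ≠ ∞ := ((measure_mono hT_sub).trans_lt (hu.abs.measure_ge_lt_top ht)).ne
  set δ := min (H - K) (μ T - K)
  have hδ_pos : 0 < δ.toReal := ENNReal.toReal_pos
    (lt_min (tsub_pos_of_lt hKH) (tsub_pos_of_lt hKt)).ne'
    (ne_top_of_le_ne_top (ENNReal.sub_ne_top hT_fin) (min_le_right _ _))
  have hδH : K + δ ≤ H := (add_le_add le_rfl (min_le_left _ _)).trans_eq
    (add_tsub_cancel_of_le hKH.le)
  have hδT : K + δ ≤ μ T := (add_le_add le_rfl (min_le_right _ _)).trans_eq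
    (add_tsub_cancel_of_le hKt.le)
  calc largestK μ K u < largestK μ K u + t * δ.toReal := lt_add_of_pos_right _ (mul_pos ht hδ_pos)
    _ ≤ largestK μ H u := largestK_add_le hμ hu hT hT_fin hT_sub hδH hδT

end largestK

end

theorem stmt6_general {Ω : Type*} [MeasurableSpace Ω] (μ : Measure Ω)
    (hμ : AtomFree μ) (u : Ω → ℝ) (hu : Integrable u μ)
    (K : ℝ≥0∞) (hK : K < μ Set.univ) :
    List.TFAE
      [μ (Function.support u) ≤ K,
       (∫ x, |u x| ∂μ) = largestK μ K u,
       ∀ H : ℝ≥0∞, K < H → H ≤ μ Set.univ → largestK μ H u = largestK μ K u,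
       ∃ h : ℝ≥0∞, K < h ∧ h ≤ μ Set.univ ∧ largestK μ h u = largestK μ K u] := by
  tfae_have 1 → 2 := integral_abs_eq_largestK hu
  tfae_have 2 → 3 := fun h2 H hKH _ =>
    le_antisymm (h2 ▸ largestK_le_integral hu) (largestK_mono hu hKH.le)
  tfae_have 3 → 4 := fun h3 => ⟨μ Set.univ, hK, le_rfl, h3 _ hK le_rfl⟩
  tfae_have 4 → 1 := by
    rintro ⟨h, hKh, -, heq⟩
    by_contra! hsupp
    exact (largestK_lt_largestK hμ hu hsupp hKh).ne' heq
  tfae_finish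

/-- in an atom-free σ-finite space, for `u ∈ L¹` and `K ∈ (0, μ(Ω))`, TFAE:
(i) `μ(supp u) ≤ K`; (ii) `‖u‖₁ = |u|_K`; (iii) `|u|_H = |u|_K` for all `H ∈ (K, μ(Ω)]`;
(iv) `|u|_h = |u|_K` for some `h ∈ (K, μ(Ω)]`. -/
theorem stmt6 {Ω : Type*} [MeasurableSpace Ω] (μ : Measure Ω) [SigmaFinite μ]
    (hμ : AtomFree μ) (u : Ω → ℝ) (hu : Integrable u μ)
    (K : ℝ≥0∞) (hK0 : 0 < K) (hK : K < μ Set.univ) :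
    List.TFAE
      [μ (Function.support u) ≤ K,
       (∫ x, |u x| ∂μ) = largestK μ K u,
       ∀ H : ℝ≥0∞, K < H → H ≤ μ Set.univ → largestK μ H u = largestK μ K u,
       ∃ h : ℝ≥0∞, K < h ∧ h ≤ μ Set.univ ∧ largestK μ h u = largestK μ K u] :=
  stmt6_general μ hμ u hu K hK
end

section
/- Let (Ω, 𝒜, μ) be an atom-free σ-finite measure space, u ∈ L^1(Ω), v ∈ L^1(Ω) ∩ L^∞(Ω), and K ∈ (0, μ(Ω)). Then ∫_Ω u·v dμ ≤ |u|_K · max(‖v‖_∞, K^{-1}‖v‖_1). -/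
open MeasureTheory Set
open scoped ENNReal

/-!
Bound `u v` by `f g` with `f = |u|`, `g = |v|` and put `M = max(‖v‖_∞, ‖v‖₁ / K)`, so that
`0 ≤ g ≤ M` and `∫ g ≤ M K`. If `{f > 0}` has measure at most `K`, take `t = 0` and
`A = {f > 0}`; otherwise let `t > 0` be the smallest level with `μ {f > t} ≤ K`. Then
`μ {f ≥ t} ≥ K`, and since `μ` has no atoms it takes every intermediate value on sets between
`{f > t}` and `{f ≥ t}` (a greedy exhaustion), giving `A` with `μ A = K` there. Pointwise
`(f - t)(g - M 1_A) ≤ 0`, and integrating gives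
`∫ f g ≤ M ∫_A f + t (∫ g - M μ A) ≤ M ∫_A f ≤ M |u|_K`.
-/

open Filter Topology

section

variable {Ω : Type*} [MeasurableSpace Ω] {μ : Measure Ω}

theorem AtomFree.exists_two_mul_le (hμ : AtomFree μ) {A : Set Ω} (hA : MeasurableSet A)
    (hA0 : 0 < μ A) : ∃ B ⊆ A, MeasurableSet B ∧ 0 < μ B ∧ 2 * μ B ≤ μ A := by
  obtain ⟨B, hB, hBA, hB0, hAB0⟩ := hμ A hA hA0
  have hsum : μ B + μ (A \ B) = μ A := by
    rw [measure_add_sdiff hB.nullMeasurableSet A, union_eq_self_of_subset_left hBA]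
  rcases le_total (μ B) (μ (A \ B)) with h | h
  · exact ⟨B, hBA, hB, hB0, by rw [two_mul, ← hsum]; gcongr⟩
  · exact ⟨A \ B, sdiff_subset, hA.diff hB, hAB0, by rw [two_mul, ← hsum]; gcongr⟩

theorem AtomFree.exists_pos_le (hμ : AtomFree μ) {C : Set Ω} (hC : MeasurableSet C)
    (hC0 : 0 < μ C) (hC_fin : μ C ≠ ∞) {δ : ℝ≥0∞} (hδ : δ ≠ 0) :
    ∃ D ⊆ C, MeasurableSet D ∧ 0 < μ D ∧ μ D ≤ δ := by
  have halve : ∀ n : ℕ, ∃ D ⊆ C, MeasurableSet D ∧ 0 < μ D ∧ 2 ^ n * μ D ≤ μ C := by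
    intro n
    induction n with
    | zero => exact ⟨C, subset_rfl, hC, hC0, by simp⟩
    | succ n ih =>
      obtain ⟨D, hDC, hD, hD0, hDn⟩ := ih
      obtain ⟨D', hD'D, hD', hD'0, hD'2⟩ := hμ.exists_two_mul_le hD hD0
      refine ⟨D', hD'D.trans hDC, hD', hD'0, ?_⟩
      calc 2 ^ (n + 1) * μ D' = 2 ^ n * (2 * μ D') := by ring
        _ ≤ 2 ^ n * μ D := by gcongr
        _ ≤ μ C := hDn
  obtain ⟨n, hn⟩ := ENNReal.exists_nat_mul_gt hδ hC_fin
  obtain ⟨D, hDC, hD, hD0, hDn⟩ := halve n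
  refine ⟨D, hDC, hD, hD0, ?_⟩
  have hn2 : (n : ℝ≥0∞) ≤ 2 ^ n := by exact_mod_cast Nat.lt_two_pow_self.le
  have : 2 ^ n * μ D < 2 ^ n * δ := hDn.trans_lt (hn.trans_le (by gcongr))
  exact (ENNReal.mul_lt_mul_iff_right (by positivity) (by simp)).1 this |>.le

theorem exists_superset_add_half_le {E S : Set Ω} (hS : MeasurableSet S) (hSE : S ⊆ E)
    {r : ℝ≥0∞} (hSr : μ S ≤ r) (hr : r ≠ ∞) :
    ∃ S', MeasurableSet S' ∧ S ⊆ S' ∧ S' ⊆ E ∧ μ S' ≤ r ∧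
      ∀ D, MeasurableSet D → D ⊆ E \ S → μ D ≤ r - μ S → μ S + μ D / 2 ≤ μ S' := by
  set s := sSup {m | ∃ D, MeasurableSet D ∧ D ⊆ E \ S ∧ μ D ≤ r - μ S ∧ μ D = m}
  have hs_fin : s ≠ ∞ :=
    ne_top_of_le_ne_top (ENNReal.sub_ne_top hr)
      (sSup_le (by rintro _ ⟨D, -, -, hD, rfl⟩; exact hD))
  obtain ⟨D₀, hD₀, hD₀E, hD₀r, hD₀s⟩ :
      ∃ D₀, MeasurableSet D₀ ∧ D₀ ⊆ E \ S ∧ μ D₀ ≤ r - μ S ∧ s / 2 ≤ μ D₀ := by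
    rcases eq_or_ne s 0 with hs0 | hs0
    · exact ⟨∅, .empty, empty_subset _, by simp, by simp [hs0]⟩
    obtain ⟨_, ⟨D₀, hD₀, hD₀E, hD₀r, rfl⟩, hD₀s⟩ :=
      lt_sSup_iff.1 (ENNReal.half_lt_self hs0 hs_fin)
    exact ⟨D₀, hD₀, hD₀E, hD₀r, hD₀s.le⟩
  have hunion : μ (S ∪ D₀) = μ S + μ D₀ :=
    measure_union ((disjoint_sdiff_right).mono_right hD₀E) hD₀
  refine ⟨S ∪ D₀, hS.union hD₀, subset_union_left, union_subset hSE (hD₀E.trans sdiff_subset),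
    ?_, fun D hD hDE hDr => ?_⟩
  · rw [hunion]
    exact (add_le_add le_rfl hD₀r).trans_eq (add_tsub_cancel_of_le hSr)
  · rw [hunion]
    gcongr
    calc μ D / 2 ≤ s / 2 := by gcongr; exact le_sSup ⟨D, hD, hDE, hDr, rfl⟩
      _ ≤ μ D₀ := hD₀s

theorem AtomFree.exists_measure_eq_between (hμ : AtomFree μ) {B E : Set Ω}
    (hB : MeasurableSet B) (hE : MeasurableSet E) (hBE : B ⊆ E) (hE_fin : μ E ≠ ∞) {r : ℝ≥0∞}
    (hBr : μ B ≤ r) (hrE : r ≤ μ E) : ∃ S, MeasurableSet S ∧ B ⊆ S ∧ S ⊆ E ∧ μ S = r := by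
  have hr : r ≠ ∞ := ne_top_of_le_ne_top hE_fin hrE
  let State := {S : Set Ω // MeasurableSet S ∧ S ⊆ E ∧ μ S ≤ r}
  have step : ∀ S : State, ∃ S' : State, S.1 ⊆ S'.1 ∧ ∀ D, MeasurableSet D → D ⊆ E \ S.1 →
      μ D ≤ r - μ S.1 → μ S.1 + μ D / 2 ≤ μ S'.1 := fun ⟨S, hS, hSE, hSr⟩ =>
    let ⟨S', hS', hSS', hS'E, hS'r, hgain⟩ := exists_superset_add_half_le hS hSE hSr hr
    ⟨⟨S', hS', hS'E, hS'r⟩, hSS', hgain⟩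
  choose next hnext_sup hnext_gain using step
  let seq : ℕ → State := fun n => Nat.rec ⟨B, hB, hBE, hBr⟩ (fun _ S => next S) n
  have hseq_mono : Monotone fun n => (seq n).1 :=
    monotone_nat_of_le_succ fun n => hnext_sup (seq n)
  set S := ⋃ n, (seq n).1
  have hS : MeasurableSet S := .iUnion fun n => (seq n).2.1
  have hSr : μ S ≤ r := by
    rw [hseq_mono.measure_iUnion]
    exact iSup_le fun n => (seq n).2.2.2
  have hSE : S ⊆ E := iUnion_subset fun n => (seq n).2.2.1
  refine ⟨S, hS, subset_iUnion (fun n => (seq n).1) 0, hSE, ?_⟩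
  by_contra hne
  -- A positive set fitting into the gap `r - μ S` was available at every step, so every
  -- greedy step gained at least half its measure: impossible below the finite bound `r`.
  have hgap : r - μ S ≠ 0 := (tsub_pos_of_lt (lt_of_le_of_ne hSr hne)).ne'
  have hES : r - μ S ≤ μ (E \ S) := by
    rw [measure_sdiff hSE hS.nullMeasurableSet (ne_top_of_le_ne_top hr hSr)]
    exact tsub_le_tsub_right hrE _
  obtain ⟨D, hDE, hD, hD0, hDr⟩ := hμ.exists_pos_le (hE.diff hS)
    ((pos_iff_ne_zero.2 hgap).trans_le hES)
    (ne_top_of_le_ne_top hE_fin (measure_mono sdiff_subset)) hgap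
  have hgain : ∀ n : ℕ, (n : ℝ≥0∞) * (μ D / 2) ≤ μ (seq n).1 := by
    intro n
    induction n with
    | zero => simp
    | succ n ih =>
      have hsub : (seq n).1 ⊆ S := subset_iUnion (fun n => (seq n).1) n
      calc ((n + 1 : ℕ) : ℝ≥0∞) * (μ D / 2) = n * (μ D / 2) + μ D / 2 := by
            push_cast; ring
        _ ≤ μ (seq n).1 + μ D / 2 := by gcongr
        _ ≤ μ (seq (n + 1)).1 := hnext_gain (seq n) D hD
            (hDE.trans (sdiff_subset_sdiff_right hsub))
            (hDr.trans (tsub_le_tsub_left (measure_mono hsub) r))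
  obtain ⟨n, hn⟩ := ENNReal.exists_nat_mul_gt (a := μ D / 2) (by simp [hD0.ne']) hr
  exact (hn.trans_le ((hgain n).trans (seq n).2.2.2)).false

theorem measure_lt_le_of_forall_gt {f : Ω → ℝ} {t : ℝ} {K : ℝ≥0∞}
    (h : ∀ s > t, μ {x | s < f x} ≤ K) : μ {x | t < f x} ≤ K := by
  obtain ⟨u, hu_anti, hu_gt, hu_lim⟩ := exists_seq_strictAnti_tendsto t
  have hunion : {x | t < f x} = ⋃ n, {x | u n < f x} := by
    ext x
    simp only [mem_ofPred_eq, mem_iUnion]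
    exact ⟨fun hx => (hu_lim.eventually (gt_mem_nhds hx)).exists,
      fun ⟨n, hn⟩ => (hu_gt n).trans hn⟩
  have hmono : Monotone fun n => {x | u n < f x} := fun m n hmn =>
    ofPred_subset_ofPred.2 fun x hx => (hu_anti.antitone hmn).trans_lt hx
  rw [hunion, hmono.measure_iUnion]
  exact iSup_le fun n => h _ (hu_gt n)

theorem le_measure_le_of_forall_lt {f : Ω → ℝ} (hf : Measurable f) {t s₀ : ℝ} (hs₀ : s₀ < t)
    (hs₀_fin : μ {x | s₀ < f x} ≠ ∞) {K : ℝ≥0∞} (h : ∀ s < t, K ≤ μ {x | s < f x}) :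
    K ≤ μ {x | t ≤ f x} := by
  obtain ⟨u, hu_mono, hu_mem, hu_lim⟩ := exists_seq_strictMono_tendsto' hs₀
  have hinter : {x | t ≤ f x} = ⋂ n, {x | u n < f x} := by
    ext x
    simp only [mem_ofPred_eq, mem_iInter]
    refine ⟨fun hx n => (hu_mem n).2.trans_le hx, fun hx => not_lt.1 fun hxt => ?_⟩
    obtain ⟨n, hn⟩ := (hu_lim.eventually (lt_mem_nhds hxt)).exists
    exact (hx n).not_gt hn
  have hanti : Antitone fun n => {x | u n < f x} := fun m n hmn =>
    ofPred_subset_ofPred.2 fun x hx => (hu_mono.monotone hmn).trans_lt hx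
  rw [hinter, hanti.measure_iInter
    (fun n => (measurableSet_lt measurable_const hf).nullMeasurableSet)
    ⟨0, ne_top_of_le_ne_top hs₀_fin
      (measure_mono (ofPred_subset_ofPred.2 fun x hx => (hu_mem 0).1.trans hx))⟩]
  exact le_iInf fun n => h _ (hu_mem n).2

theorem AtomFree.exists_level_set (hμ : AtomFree μ) {f : Ω → ℝ} (hf : Measurable f)
    (hf_fin : ∀ t > 0, μ {x | t < f x} ≠ ∞) {K : ℝ≥0∞} (hK : K ≠ 0) :
    ∃ (A : Set Ω) (t : ℝ), MeasurableSet A ∧ 0 ≤ t ∧ μ A ≤ K ∧ (t = 0 ∨ μ A = K) ∧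
      {x | t < f x} ⊆ A ∧ A ⊆ {x | t ≤ f x} := by
  by_cases h0 : μ {x | 0 < f x} ≤ K
  · exact ⟨_, 0, measurableSet_lt measurable_const hf, le_rfl, h0, .inl rfl, subset_rfl,
      ofPred_subset_ofPred.2 fun x => le_of_lt⟩
  set T := {t : ℝ | μ {x | t < f x} ≤ K}
  have hT_pos : ∀ t ∈ T, 0 < t := fun t ht => not_le.1 fun h =>
    h0 ((measure_mono fun x hx => lt_of_le_of_lt h hx).trans ht)
  have hT_bdd : BddBelow T := ⟨0, fun t ht => (hT_pos t ht).le⟩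
  have hT_ne : T.Nonempty := by
    have hlim : Tendsto (fun n : ℕ => μ {x | (n : ℝ) < f x}) atTop (𝓝 0) := by
      have hempty : ⋂ n : ℕ, {x | (n : ℝ) < f x} = ∅ :=
        eq_empty_of_forall_notMem fun x hx =>
          let ⟨n, hn⟩ := exists_nat_ge (f x)
          (mem_iInter.1 hx n).not_ge hn
      rw [← measure_empty (μ := μ), ← hempty]
      exact tendsto_measure_iInter_atTop
        (fun n => (measurableSet_lt measurable_const hf).nullMeasurableSet)
        (fun m n hmn => ofPred_subset_ofPred.2 fun x hx =>
          lt_of_le_of_lt (by exact_mod_cast hmn) hx)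
        ⟨1, by simpa using hf_fin 1 one_pos⟩
    obtain ⟨n, hn⟩ := (hlim.eventually (gt_mem_nhds (pos_iff_ne_zero.2 hK))).exists
    exact ⟨n, hn.le⟩
  set t₀ := sInf T
  have ht₀T : t₀ ∈ T := measure_lt_le_of_forall_gt fun s hs =>
    let ⟨t, htT, hts⟩ := exists_lt_of_csInf_lt hT_ne hs
    (measure_mono fun x hx => hts.trans hx).trans htT
  have ht₀ : 0 < t₀ := hT_pos t₀ ht₀T
  have hK_le : K ≤ μ {x | t₀ ≤ f x} :=
    le_measure_le_of_forall_lt hf (half_lt_self ht₀) (hf_fin _ (half_pos ht₀))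
      fun s hs => (not_le.1 fun hsT => notMem_of_lt_csInf hs hT_bdd hsT).le
  obtain ⟨A, hA, hsupA, hAsub, hμA⟩ := hμ.exists_measure_eq_between
    (measurableSet_lt measurable_const hf) (measurableSet_le measurable_const hf)
    (ofPred_subset_ofPred.2 fun x => le_of_lt)
    (ne_top_of_le_ne_top (hf_fin _ (half_pos ht₀))
      (measure_mono (ofPred_subset_ofPred.2 fun x => (half_lt_self ht₀).trans_le)))
    ht₀T hK_le
  exact ⟨A, t₀, hA, ht₀.le, hμA.le, .inr hμA, hsupA, hAsub⟩

/-- Integrate `(f - t) (g - M 1_A) ≤ 0`, which holds as `f ≥ t`, `g ≤ M` on `A` and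
`f ≤ t`, `g ≥ 0` off `A`. -/
theorem integral_mul_le_of_level_set {f g : Ω → ℝ} (hf : Integrable f μ)
    (hg : Integrable g μ) (hfg : Integrable (fun x => f x * g x) μ) {A : Set Ω}
    (hA : MeasurableSet A) (hμA : μ A ≠ ∞) {t M : ℝ} (hfA : ∀ᵐ x ∂μ, x ∈ A → t ≤ f x)
    (hfAc : ∀ᵐ x ∂μ, x ∉ A → f x ≤ t) (hg0 : ∀ᵐ x ∂μ, 0 ≤ g x) (hgM : ∀ᵐ x ∂μ, g x ≤ M) :
    ∫ x, f x * g x ∂μ ≤ M * ∫ x in A, f x ∂μ + t * (∫ x, g x ∂μ - M * μ.real A) := by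
  have hA_int : Integrable (A.indicator (1 : Ω → ℝ)) μ :=
    (integrable_indicator_iff hA).2 (integrableOn_const hμA)
  have hpointwise : ∀ᵐ x ∂μ, f x * g x ≤
      M * A.indicator f x + t * (g x - M * A.indicator (1 : Ω → ℝ) x) := by
    filter_upwards [hfA, hfAc, hg0, hgM] with x hxA hxAc hx0 hxM
    by_cases hx : x ∈ A
    · simp only [indicator_of_mem hx, Pi.one_apply, mul_one]
      nlinarith [hxA hx]
    · simp only [indicator_of_notMem hx, mul_zero, sub_zero, zero_add]
      nlinarith [hxAc hx]
  have hfA_int : Integrable (fun x => M * A.indicator f x) μ := (hf.indicator hA).const_mul M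
  have hgA_int : Integrable (fun x => g x - M * A.indicator (1 : Ω → ℝ) x) μ :=
    hg.sub (hA_int.const_mul M)
  calc ∫ x, f x * g x ∂μ
      ≤ ∫ x, M * A.indicator f x + t * (g x - M * A.indicator (1 : Ω → ℝ) x) ∂μ :=
        integral_mono_ae hfg (hfA_int.add (hgA_int.const_mul t)) hpointwise
    _ = M * ∫ x in A, f x ∂μ + t * (∫ x, g x ∂μ - M * μ.real A) := by
        rw [integral_add hfA_int (hgA_int.const_mul t), integral_const_mul, integral_const_mul,
          integral_indicator hA, integral_sub hg (hA_int.const_mul M), integral_const_mul,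
          integral_indicator_one hA]

/-- The bathtub principle. -/
theorem AtomFree.exists_integral_mul_le_setIntegral (hμ : AtomFree μ) {f g : Ω → ℝ}
    (hf : Integrable f μ) (hg : Integrable g μ) (hfg : Integrable (fun x => f x * g x) μ)
    {K : ℝ≥0∞} (hK0 : K ≠ 0) (hK : K ≠ ∞) {M : ℝ} (hg0 : ∀ᵐ x ∂μ, 0 ≤ g x)
    (hgM : ∀ᵐ x ∂μ, g x ≤ M) (hg_mass : ∫ x, g x ∂μ ≤ M * K.toReal) :
    ∃ A, MeasurableSet A ∧ μ A ≤ K ∧ ∫ x, f x * g x ∂μ ≤ M * ∫ x in A, f x ∂μ := by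
  set f' := hf.aemeasurable.mk f
  have hff' : f =ᵐ[μ] f' := hf.aemeasurable.ae_eq_mk
  obtain ⟨A, t, hA, ht, hμA, hA_eq, hsupA, hAsub⟩ :=
    hμ.exists_level_set hf.aemeasurable.measurable_mk
      (fun t ht => ((hf.congr hff').measure_gt_lt_top ht).ne) hK0
  refine ⟨A, hA, hμA, ?_⟩
  have hslack : t * (∫ x, g x ∂μ - M * μ.real A) ≤ 0 := by
    rcases hA_eq with rfl | hμA
    · simp
    · rw [measureReal_def, hμA]
      exact mul_nonpos_of_nonneg_of_nonpos ht (sub_nonpos.2 hg_mass)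
  have hbound := integral_mul_le_of_level_set hf hg hfg hA (ne_top_of_le_ne_top hK hμA)
    (hff'.mono fun x hx hxA => by rw [hx]; exact hAsub hxA)
    (hff'.mono fun x hx hxA => by rw [hx]; exact not_lt.1 fun h => hxA (hsupA h)) hg0 hgM
  linarith

theorem setIntegral_abs_le_largestK {K : ℝ≥0∞} {u : Ω → ℝ} (hu : Integrable u μ) {A : Set Ω}
    (hA : MeasurableSet A) (hμA : μ A ≤ K) : ∫ x in A, |u x| ∂μ ≤ largestK μ K u :=
  le_csSup ⟨∫ x, |u x| ∂μ, by
    rintro _ ⟨B, -, -, rfl⟩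
    exact setIntegral_le_integral hu.abs (.of_forall fun x => abs_nonneg _)⟩
    ⟨A, hA, hμA, rfl⟩

theorem MemLp.ae_norm_le_toReal_eLpNorm_top {E : Type*} [NormedAddCommGroup E] {v : Ω → E}
    (hv : MemLp v ∞ μ) : ∀ᵐ x ∂μ, ‖v x‖ ≤ (eLpNorm v ∞ μ).toReal := by
  filter_upwards [enorm_ae_le_eLpNormEssSup v μ] with x hx
  rw [← toReal_enorm (v x)]
  refine ENNReal.toReal_mono hv.eLpNorm_ne_top ?_
  rwa [eLpNorm_exponent_top]

end

theorem stmt10_general {Ω : Type*} [MeasurableSpace Ω] (μ : Measure Ω)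
    (hμ : AtomFree μ) (u v : Ω → ℝ) (hu : Integrable u μ)
    (hv1 : Integrable v μ) (hvinf : MemLp v ∞ μ)
    (K : ℝ≥0∞) (hK0 : 0 < K) (hK : K < μ Set.univ) :
    ∫ x, u x * v x ∂μ ≤
      largestK μ K u * max (eLpNorm v ∞ μ).toReal ((∫ x, |v x| ∂μ) / K.toReal) := by
  set M := max (eLpNorm v ∞ μ).toReal ((∫ x, |v x| ∂μ) / K.toReal)
  have hK_real : 0 < K.toReal := ENNReal.toReal_pos hK0.ne' hK.ne_top
  have huv : Integrable (fun x => u x * v x) μ := hu.mul_of_top_left hvinf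
  have huv_abs : Integrable (fun x => |u x| * |v x|) μ := by simpa only [abs_mul] using huv.abs
  obtain ⟨A, hA, hμA, hbound⟩ := hμ.exists_integral_mul_le_setIntegral hu.abs hv1.abs huv_abs
    hK0.ne' hK.ne_top (.of_forall fun x => abs_nonneg (v x))
    ((MemLp.ae_norm_le_toReal_eLpNorm_top hvinf).mono fun x hx => hx.trans (le_max_left _ _))
    ((div_le_iff₀ hK_real).1 (le_max_right _ _))
  calc ∫ x, u x * v x ∂μ ≤ ∫ x, |u x| * |v x| ∂μ :=
        integral_mono huv huv_abs fun x => (le_abs_self _).trans (abs_mul _ _).le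
    _ ≤ M * ∫ x in A, |u x| ∂μ := hbound
    _ ≤ M * largestK μ K u :=
        mul_le_mul_of_nonneg_left (setIntegral_abs_le_largestK hu hA hμA)
          (le_max_of_le_left ENNReal.toReal_nonneg)
    _ = largestK μ K u * M := mul_comm _ _

/-- generalized Hölder inequality: for atom-free σ-finite `μ`, `u ∈ L¹`,
`v ∈ L¹ ∩ L^∞` and `K ∈ (0, μ(Ω))`:
`∫ u·v dμ ≤ |u|_K · max(‖v‖_∞, K⁻¹‖v‖₁)`. -/
theorem stmt10 {Ω : Type*} [MeasurableSpace Ω] (μ : Measure Ω) [SigmaFinite μ]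
    (hμ : AtomFree μ) (u v : Ω → ℝ) (hu : Integrable u μ)
    (hv1 : Integrable v μ) (hvinf : MemLp v ∞ μ)
    (K : ℝ≥0∞) (hK0 : 0 < K) (hK : K < μ Set.univ) :
    ∫ x, u x * v x ∂μ ≤
      largestK μ K u * max (eLpNorm v ∞ μ).toReal ((∫ x, |v x| ∂μ) / K.toReal) :=
  stmt10_general μ hμ u v hu hv1 hvinf K hK0 hK
end
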